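/- Under the hypothesis of the super-multiplicativity inequality per((H_{2^n}⊗I_{2^m})(I_{2^n}⊗H_{2^m})) ≥ per(H_{2^n}⊗I_{2^m})·per(I_{2^n}⊗H_{2^m}) for given n,m ≥ 2, one has per(H_{2^{n+m}}) ≥ (per H_{2^n})^{2^m} · (per H_{2^m})^{2^n}. -/

import Mathlib

open Matrix Kronecker

def H2 : Matrix (Fin 2) (Fin 2) ℤ := !![1, 1; 1, -1]

/-- The Sylvester Hadamard matrix of order `2^k`, the Kronecker product of `k` copies of `H2`. -/
def sylvester (k : ℕ) : Matrix (Fin k → Fin 2) (Fin k → Fin 2) ℤ :=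
  fun g h => ∏ i, H2 (g i) (h i)

/-!
Since `H_{2^(n+m)}` is `H_{2^n} ⊗ H_{2^m}` up to a simultaneous reindexing, which does not change
the permanent, and `A ⊗ B = (A ⊗ I)(I ⊗ B)`, the hypothesis bounds `per H_{2^(n+m)}` below by
`per (H_{2^n} ⊗ I) · per (I ⊗ H_{2^m})`. Both factors are permanents of block-diagonal matrices
(after a reindexing for `I ⊗ B`), and the permanent of a block-diagonal matrix is the product of
the permanents of its blocks: a permutation that leaves some block contributes a zero entry.
-/

namespace Equiv.Perm

variable {n o : Type*}

theorem prodCongrLeft_injective :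
    Function.Injective (prodCongrLeft : (o → Perm n) → Perm (n × o)) := by
  intro τ τ' h
  ext k x
  simpa using congrArg Prod.fst (Equiv.ext_iff.mp h (x, k))

theorem exists_prodCongrLeft_eq (σ : Perm (n × o)) (hσ : ∀ p, (σ p).2 = p.2) :
    ∃ τ : o → Perm n, prodCongrLeft τ = σ := by
  have hσ_symm : ∀ p, (σ.symm p).2 = p.2 := fun p => by
    simpa using (hσ (σ.symm p)).symm
  have fiber (k : o) (x : n) : ((σ (x, k)).1, k) = σ (x, k) := Prod.ext rfl (hσ (x, k)).symm
  have fiber_symm (k : o) (x : n) : ((σ.symm (x, k)).1, k) = σ.symm (x, k) :=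
    Prod.ext rfl (hσ_symm (x, k)).symm
  let τ (k : o) : Perm n :=
    { toFun x := (σ (x, k)).1
      invFun x := (σ.symm (x, k)).1
      left_inv x := by simp [fiber]
      right_inv x := by simp [fiber_symm] }
  refine ⟨τ, ?_⟩
  ext ⟨x, k⟩ <;> simp [τ, hσ]

end Equiv.Perm

namespace Matrix

variable {n o α R : Type*} [Fintype n] [DecidableEq n] [CommSemiring R]

theorem permanent_submatrix_equiv_self [Fintype o] [DecidableEq o] (e : o ≃ n)
    (M : Matrix n n R) : (M.submatrix e e).permanent = M.permanent := by
  unfold permanent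
  rw [← e.permCongr.sum_comp]
  refine Finset.sum_congr rfl fun σ _ => ?_
  rw [← e.prod_comp]
  simp [Equiv.permCongr_apply]

theorem permanent_blockDiagonal [Fintype o] [DecidableEq o] (M : o → Matrix n n R) :
    (blockDiagonal M).permanent = ∏ k, (M k).permanent := by
  simp only [permanent, Fintype.prod_sum]
  symm
  refine Fintype.sum_of_injective _ Equiv.Perm.prodCongrLeft_injective _ _ ?_ fun τ => ?_
  · intro σ hσ
    obtain ⟨p, hp⟩ : ∃ p, (σ p).2 ≠ p.2 := by
      by_contra! h
      exact hσ (Equiv.Perm.exists_prodCongrLeft_eq σ h)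
    exact Finset.prod_eq_zero (Finset.mem_univ p) (blockDiagonal_apply_ne _ _ _ hp)
  · rw [Fintype.prod_prod_type_right]
    simp [blockDiagonal_apply_eq]

theorem permanent_kronecker_one [Fintype α] [DecidableEq α] (A : Matrix n n R) :
    (A ⊗ₖ (1 : Matrix α α R)).permanent = A.permanent ^ Fintype.card α := by
  rw [← diagonal_one, kroneckerMap_diagonal_right _ mul_zero, permanent_blockDiagonal]
  simp

theorem permanent_one_kronecker [Fintype α] [DecidableEq α] (B : Matrix n n R) :
    ((1 : Matrix α α R) ⊗ₖ B).permanent = B.permanent ^ Fintype.card α := by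
  rw [← diagonal_one, kroneckerMap_diagonal_left _ zero_mul, reindex_apply,
    permanent_submatrix_equiv_self, permanent_blockDiagonal]
  simp

end Matrix

theorem sylvester_add (n m : ℕ) :
    sylvester (n + m) = (sylvester n ⊗ₖ sylvester m).submatrix
      (Fin.appendEquiv n m).symm (Fin.appendEquiv n m).symm := by
  ext g h
  simp [sylvester, Fin.prod_univ_add]

theorem permanent_sylvester_supermultiplicative_general (n m : ℕ)
    (hyp : ((sylvester n ⊗ₖ (1 : Matrix (Fin m → Fin 2) (Fin m → Fin 2) ℤ)) *
          ((1 : Matrix (Fin n → Fin 2) (Fin n → Fin 2) ℤ) ⊗ₖ sylvester m)).permanent ≥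
        (sylvester n ⊗ₖ (1 : Matrix (Fin m → Fin 2) (Fin m → Fin 2) ℤ)).permanent *
          ((1 : Matrix (Fin n → Fin 2) (Fin n → Fin 2) ℤ) ⊗ₖ sylvester m).permanent) :
    (sylvester (n + m)).permanent ≥
      (sylvester n).permanent ^ (2 ^ m) * (sylvester m).permanent ^ (2 ^ n) := by
  have card_index (k : ℕ) : Fintype.card (Fin k → Fin 2) = 2 ^ k := by simp
  have kronecker_eq_mul :
      sylvester n ⊗ₖ sylvester m = (sylvester n ⊗ₖ 1) * (1 ⊗ₖ sylvester m) := by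
    rw [← mul_kronecker_mul, Matrix.mul_one, Matrix.one_mul]
  rw [sylvester_add, permanent_submatrix_equiv_self, kronecker_eq_mul]
  rwa [permanent_kronecker_one, permanent_one_kronecker, card_index, card_index] at hyp

theorem permanent_sylvester_supermultiplicative (n m : ℕ) (hn : 2 ≤ n) (hm : 2 ≤ m)
    (hyp : ((sylvester n ⊗ₖ (1 : Matrix (Fin m → Fin 2) (Fin m → Fin 2) ℤ)) *
          ((1 : Matrix (Fin n → Fin 2) (Fin n → Fin 2) ℤ) ⊗ₖ sylvester m)).permanent ≥
        (sylvester n ⊗ₖ (1 : Matrix (Fin m → Fin 2) (Fin m → Fin 2) ℤ)).permanent *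
          ((1 : Matrix (Fin n → Fin 2) (Fin n → Fin 2) ℤ) ⊗ₖ sylvester m).permanent) :
    (sylvester (n + m)).permanent ≥
      (sylvester n).permanent ^ (2 ^ m) * (sylvester m).permanent ^ (2 ^ n) :=
  permanent_sylvester_supermultiplicative_general n m hyp
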